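/- arXiv:2111.14471 — 3 statements merged into one kernel-verified Lean document; each statement's English description precedes it below -/
import Mathlib

section
/- Let κ > 0, let N₀, N₁ ≥ 0 be real numbers, and let ζ₀, ζ₁ ∈ ℂ satisfy κ|ζ_A|² = 2·sinh(κN_A/2) for A = 0, 1. Define the deformed spinors t = (e^{κN₁/4}·ζ₀, e^{−κN₀/4}·ζ₁) and τ = (e^{−κN₁/4}·ζ₀, e^{κN₀/4}·ζ₁) in ℂ². Then ⟨t|t⟩ = ⟨τ|τ⟩ = (2/κ)·sinh(κ(N₀+N₁)/2). -/
/-! With `a = κN₀/2`, `b = κN₁/2`, both norms have the form `e^b |ζ₀|² + e^{-a} |ζ₁|²` (for `τ` with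
the indices swapped), and `e^b sinh a + e^{-a} sinh b = sinh (a + b)` because
`e^{±x} = cosh x ± sinh x`. -/

open Matrix

noncomputable section

/-- `⟨x|`: the conjugate-transpose row vector `(x̄₀, x̄₁)`. -/
def braC (x : Fin 2 → ℂ) : Fin 2 → ℂ := fun i => star (x i)

/-- `|x]`: the column vector `(−x̄₁, x̄₀)`. -/
def ketS (x : Fin 2 → ℂ) : Fin 2 → ℂ := ![-(star (x 1)), star (x 0)]

/-- `[x|`: the row vector `(−x₁, x₀)`. -/
def braS (x : Fin 2 → ℂ) : Fin 2 → ℂ := ![-(x 1), x 0]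

/-- `⟨x|y⟩ = x̄₀y₀ + x̄₁y₁`. -/
def bk (x y : Fin 2 → ℂ) : ℂ := star (x 0) * y 0 + star (x 1) * y 1

/-- `[x|y⟩ = x₀y₁ − x₁y₀`. -/
def sk (x y : Fin 2 → ℂ) : ℂ := x 0 * y 1 - x 1 * y 0

/-- `⟨x|y] = x̄₁ȳ₀ − x̄₀ȳ₁`. -/
def bs (x y : Fin 2 → ℂ) : ℂ := star (x 1) * star (y 0) - star (x 0) * star (y 1)

/-- `[x|y] = x₀ȳ₀ + x₁ȳ₁`. -/
def ss (x y : Fin 2 → ℂ) : ℂ := x 0 * star (y 0) + x 1 * star (y 1)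

end

theorem Real.exp_mul_sinh_add_exp_neg_mul_sinh (a b : ℝ) :
    Real.exp b * Real.sinh a + Real.exp (-a) * Real.sinh b = Real.sinh (a + b) := by
  rw [Real.sinh_add, ← Real.cosh_add_sinh, ← Real.cosh_sub_sinh]
  ring

theorem exp_mul_add_exp_neg_mul_of_mul_eq_two_sinh {κ a b z₀ z₁ : ℝ} (hκ : κ ≠ 0)
    (h₀ : κ * z₀ = 2 * Real.sinh a) (h₁ : κ * z₁ = 2 * Real.sinh b) :
    Real.exp b * z₀ + Real.exp (-a) * z₁ = 2 / κ * Real.sinh (a + b) := by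
  rw [← Real.exp_mul_sinh_add_exp_neg_mul_sinh, div_mul_eq_mul_div, eq_div_iff hκ]
  linear_combination Real.exp b * h₀ + Real.exp (-a) * h₁

theorem bk_self (x : Fin 2 → ℂ) :
    bk x x = ((Complex.normSq (x 0) + Complex.normSq (x 1) : ℝ) : ℂ) := by
  simp only [bk, Complex.star_def, Complex.ofReal_add, Complex.normSq_eq_conj_mul_self]

theorem Complex.normSq_exp_div_four_mul (x : ℝ) (ζ : ℂ) :
    Complex.normSq (Real.exp (x / 4) * ζ) = Real.exp (x / 2) * Complex.normSq ζ := by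
  rw [Complex.normSq_mul, Complex.normSq_ofReal, ← Real.exp_add]
  ring_nf

theorem deformed_spinor_norms_general (κ N₀ N₁ : ℝ) (hκ : 0 < κ)
    (ζ₀ ζ₁ : ℂ)
    (h₀ : κ * Complex.normSq ζ₀ = 2 * Real.sinh (κ * N₀ / 2))
    (h₁ : κ * Complex.normSq ζ₁ = 2 * Real.sinh (κ * N₁ / 2)) :
    let t : Fin 2 → ℂ := ![(Real.exp (κ * N₁ / 4) : ℂ) * ζ₀,
                           (Real.exp (-(κ * N₀) / 4) : ℂ) * ζ₁]
    let τ : Fin 2 → ℂ := ![(Real.exp (-(κ * N₁) / 4) : ℂ) * ζ₀,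
                           (Real.exp (κ * N₀ / 4) : ℂ) * ζ₁]
    bk t t = ((2 / κ) * Real.sinh (κ * (N₀ + N₁) / 2) : ℝ) ∧
    bk τ τ = ((2 / κ) * Real.sinh (κ * (N₀ + N₁) / 2) : ℝ) := by
  intro t τ
  constructor
  · simp only [bk_self, t, Matrix.cons_val_zero, Matrix.cons_val_one,
      Complex.normSq_exp_div_four_mul]
    convert congrArg Complex.ofReal
      (exp_mul_add_exp_neg_mul_of_mul_eq_two_sinh hκ.ne' h₀ h₁) using 4 <;> ring_nf
  · rw [bk_self, add_comm (Complex.normSq (τ 0)), add_comm N₀]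
    simp only [τ, Matrix.cons_val_zero, Matrix.cons_val_one, Complex.normSq_exp_div_four_mul]
    convert congrArg Complex.ofReal
      (exp_mul_add_exp_neg_mul_of_mul_eq_two_sinh hκ.ne' h₁ h₀) using 4 <;> ring_nf

/-- Norms of the deformed spinors: if `κ|ζ_A|² = 2·sinh(κN_A/2)` then
`⟨t|t⟩ = ⟨τ|τ⟩ = (2/κ)·sinh(κ(N₀+N₁)/2)`. -/
theorem deformed_spinor_norms (κ N₀ N₁ : ℝ) (hκ : 0 < κ) (hN₀ : 0 ≤ N₀) (hN₁ : 0 ≤ N₁)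
    (ζ₀ ζ₁ : ℂ)
    (h₀ : κ * Complex.normSq ζ₀ = 2 * Real.sinh (κ * N₀ / 2))
    (h₁ : κ * Complex.normSq ζ₁ = 2 * Real.sinh (κ * N₁ / 2)) :
    let t : Fin 2 → ℂ := ![(Real.exp (κ * N₁ / 4) : ℂ) * ζ₀,
                           (Real.exp (-(κ * N₀) / 4) : ℂ) * ζ₁]
    let τ : Fin 2 → ℂ := ![(Real.exp (-(κ * N₁) / 4) : ℂ) * ζ₀,
                           (Real.exp (κ * N₀ / 4) : ℂ) * ζ₁]
    bk t t = ((2 / κ) * Real.sinh (κ * (N₀ + N₁) / 2) : ℝ) ∧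
    bk τ τ = ((2 / κ) * Real.sinh (κ * (N₀ + N₁) / 2) : ℝ) :=
  deformed_spinor_norms_general κ N₀ N₁ hκ ζ₀ ζ₁ h₀ h₁
end

section
/- Let κ > 0, let N₀, N₁ ≥ 0 be real numbers, and let ζ₀, ζ₁ ∈ ℂ satisfy κ|ζ_A|² = 2·sinh(κN_A/2) for A = 0, 1. Define t = (e^{κN₁/4}·ζ₀, e^{−κN₀/4}·ζ₁), τ = (e^{−κN₁/4}·ζ₀, e^{κN₀/4}·ζ₁) in ℂ², and the flux matrix ℓ = [[e^{κ(N₁−N₀)/4}, 0], [−κ·ζ̄₀·ζ₁, e^{κ(N₀−N₁)/4}]]. Then ℓ·τ = e^{−κ(N₀+N₁)/4}·t; equivalently, since ℓ is invertible, τ = e^{−κ(N₀+N₁)/4}·ℓ⁻¹·t (the parallel transport relation between the two deformed spinors of a ribbon edge). -/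
open Matrix

/-- Parallel transport relation between the two deformed spinors of a ribbon edge:
`ℓ·τ = e^{−κ(N₀+N₁)/4}·t` for the flux matrix
`ℓ = [[e^{κ(N₁−N₀)/4}, 0], [−κ·ζ̄₀·ζ₁, e^{κ(N₀−N₁)/4}]]`. -/
theorem flux_parallel_transport (κ N₀ N₁ : ℝ) (hκ : 0 < κ) (hN₀ : 0 ≤ N₀) (hN₁ : 0 ≤ N₁)
    (ζ₀ ζ₁ : ℂ)
    (h₀ : κ * Complex.normSq ζ₀ = 2 * Real.sinh (κ * N₀ / 2))
    (h₁ : κ * Complex.normSq ζ₁ = 2 * Real.sinh (κ * N₁ / 2)) :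
    let t : Fin 2 → ℂ := ![(Real.exp (κ * N₁ / 4) : ℂ) * ζ₀,
                           (Real.exp (-(κ * N₀) / 4) : ℂ) * ζ₁]
    let τ : Fin 2 → ℂ := ![(Real.exp (-(κ * N₁) / 4) : ℂ) * ζ₀,
                           (Real.exp (κ * N₀ / 4) : ℂ) * ζ₁]
    let ℓ : Matrix (Fin 2) (Fin 2) ℂ :=
      !![(Real.exp (κ * (N₁ - N₀) / 4) : ℂ), 0;
         -(κ : ℂ) * star ζ₀ * ζ₁, (Real.exp (κ * (N₀ - N₁) / 4) : ℂ)]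
    ℓ.mulVec τ = ((Real.exp (-(κ * (N₀ + N₁)) / 4) : ℝ) : ℂ) • t := by
  intro t τ ℓ
  set x := Complex.exp (↑κ * ↑N₀ / 4) with hxdef
  have hx := Complex.exp_ne_zero (↑κ * ↑N₀ / 4)
  have hy := Complex.exp_ne_zero (↑κ * ↑N₁ / 4)
  have key : (κ : ℂ) * (starRingEnd ℂ ζ₀ * ζ₀) * x ^ 2 = x ^ 4 - 1 := by
    have h := congrArg Complex.ofReal h₀
    push_cast [Real.sinh_eq] at h
    rw [show ((Complex.normSq ζ₀ : ℝ) : ℂ) = starRingEnd ℂ ζ₀ * ζ₀ by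
      rw [Complex.normSq_eq_conj_mul_self]] at h
    have e2 : Complex.exp (↑κ * ↑N₀ / 2) = x ^ 2 := by
      rw [hxdef, ← Complex.exp_nat_mul]; congr 1; push_cast; ring
    have e2' : Complex.exp (-(↑κ * ↑N₀ / 2)) * x ^ 2 = 1 := by
      rw [hxdef, ← Complex.exp_nat_mul, ← Complex.exp_add, ← Complex.exp_zero]
      congr 1; push_cast; ring
    rw [h, e2]
    linear_combination -e2'
  funext i
  fin_cases i <;>
    simp [t, τ, ℓ, Matrix.mulVec, dotProduct, Fin.sum_univ_two, Complex.ofReal_exp,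
      Complex.star_def]
  · rw [← mul_assoc, ← Complex.exp_add, ← mul_assoc, ← Complex.exp_add]
    congr 2; ring
  · rw [show Complex.exp (-(↑κ * ↑N₁) / 4) = (Complex.exp (↑κ * ↑N₁ / 4))⁻¹ by
        rw [← Complex.exp_neg]; congr 1; ring,
      show Complex.exp (↑κ * (↑N₀ - ↑N₁) / 4) = x * (Complex.exp (↑κ * ↑N₁ / 4))⁻¹ by
        rw [hxdef, ← Complex.exp_neg, ← Complex.exp_add]; congr 1; ring,
      show Complex.exp (-(↑κ * (↑N₀ + ↑N₁)) / 4) = x⁻¹ * (Complex.exp (↑κ * ↑N₁ / 4))⁻¹ by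
        rw [hxdef, ← Complex.exp_neg, ← Complex.exp_neg, ← Complex.exp_add]; congr 1; ring,
      show Complex.exp (-(↑κ * ↑N₀) / 4) = x⁻¹ by
        rw [hxdef, ← Complex.exp_neg]; congr 1; ring]
    have hx' : x ≠ 0 := hx
    field_simp
    linear_combination (-ζ₁) * key
end

section
/- (Spinorial Hamiltonian constraint on a triangular face.) Let u₁, u₆, ũ₂ ∈ SU(2) satisfy the flatness constraint ũ₂·u₁⁻¹·u₆⁻¹ = 𝟙. Let τ₁, t̃₁ ∈ ℂ² be nonzero vectors with u₁ = (|τ₁⟩[t̃₁| − |τ₁]⟨t̃₁|)/N₁ where N₁ = √(⟨τ₁|τ₁⟩·⟨t̃₁|t̃₁⟩). Let t₂, τ̃₂ ∈ ℂ² satisfy the parallel transport relation ⟨t₂|·ũ₂ = [τ̃₂| (as row vectors), and let τ₆, t̃₆ ∈ ℂ² satisfy u₆⁻¹·|τ₆] = −|t̃₆⟩. Then ⟨t₂|τ₆] = (1/N₁)·([t̃₆|τ₁⟩·[t̃₁|τ̃₂⟩ − [t̃₆|τ₁]·⟨t̃₁|τ̃₂⟩); that is, the holonomy variables drop out and the flatness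 constraint becomes a polynomial relation among the quadratic spinor invariants on the three corners of the face. -/
open Matrix

/-! Flatness carries `⟨t₂|τ₆]` around the face to `[τ̃₂| u₁⁻¹ (−|t̃₆⟩)`. Since `det u₁ = 1`,
`u₁⁻¹` is the adjugate of `u₁`, and the adjugate of `|τ⟩[t| − |τ]⟨t|` is `−(|t⟩[τ| − |t]⟨τ|)`:
the two spinors swap roles. Contracting this matrix between `[τ̃₂|` and `|t̃₆⟩` gives the
quadratic invariants directly. -/

theorem Matrix.inv_eq_adjugate_of_det_eq_one {n α : Type*} [Fintype n] [DecidableEq n]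
    [CommRing α] {A : Matrix n n α} (hA : A.det = 1) : A⁻¹ = A.adjugate := by
  rw [inv_def, hA, Ring.inverse_one, one_smul]

theorem bs_eq_braC_dotProduct_ketS (x y : Fin 2 → ℂ) : bs x y = braC x ⬝ᵥ ketS y := by
  simp only [dotProduct, Fin.sum_univ_two, bs, braC, ketS, cons_val_zero, cons_val_one,
    cons_val_fin_one]
  ring

theorem braC_dotProduct (x y : Fin 2 → ℂ) : braC x ⬝ᵥ y = bk x y := by
  simp only [dotProduct, Fin.sum_univ_two, braC, bk]

theorem braS_dotProduct (x y : Fin 2 → ℂ) : braS x ⬝ᵥ y = sk x y := by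
  simp only [dotProduct, Fin.sum_univ_two, braS, sk, cons_val_zero, cons_val_one,
    cons_val_fin_one]
  ring

theorem braS_dotProduct_ketS (x y : Fin 2 → ℂ) : braS x ⬝ᵥ ketS y = ss x y := by
  simp only [dotProduct, Fin.sum_univ_two, braS, ketS, ss, cons_val_zero, cons_val_one,
    cons_val_fin_one]
  ring

theorem sk_anticomm (x y : Fin 2 → ℂ) : sk y x = -sk x y := by
  simp only [sk]
  ring

theorem ss_eq_bk (x y : Fin 2 → ℂ) : ss x y = bk y x := by
  simp only [ss, bk]
  ring

def spinorMatrix (τ t : Fin 2 → ℂ) : Matrix (Fin 2) (Fin 2) ℂ :=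
  vecMulVec τ (braS t) - vecMulVec (ketS τ) (braC t)

theorem spinorMatrix_apply (τ t : Fin 2 → ℂ) (i j : Fin 2) :
    spinorMatrix τ t i j = τ i * braS t j - ketS τ i * braC t j := rfl

theorem adjugate_spinorMatrix (τ t : Fin 2 → ℂ) :
    (spinorMatrix τ t).adjugate = -spinorMatrix t τ := by
  rw [adjugate_fin_two]
  ext i j
  fin_cases i <;> fin_cases j <;>
    simp only [Fin.zero_eta, Fin.mk_one, Fin.isValue, of_apply, cons_val', cons_val_zero,
      cons_val_one, cons_val_fin_one, Matrix.neg_apply, spinorMatrix_apply, braS, ketS, braC] <;>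
    ring

theorem braS_dotProduct_spinorMatrix_mulVec (a τ t b : Fin 2 → ℂ) :
    braS a ⬝ᵥ spinorMatrix τ t *ᵥ b = sk a τ * sk t b - ss a τ * bk t b := by
  rw [dotProduct_mulVec, spinorMatrix, vecMul_sub, vecMul_vecMulVec, vecMul_vecMulVec,
    sub_dotProduct, smul_dotProduct, smul_dotProduct, braS_dotProduct, braS_dotProduct,
    braC_dotProduct, braS_dotProduct_ketS, smul_eq_mul, smul_eq_mul]

theorem triangular_face_hamiltonian_general
    (u₁ u₆ ut₂ : Matrix (Fin 2) (Fin 2) ℂ)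
    (hu₁ : u₁ ∈ Matrix.unitaryGroup (Fin 2) ℂ ∧ u₁.det = 1)
    (hflat : ut₂ * u₁⁻¹ * u₆⁻¹ = 1)
    (τ₁ tt₁ : Fin 2 → ℂ)
    (N₁ : ℝ)
    (hu₁eq : u₁ = ((N₁ : ℂ))⁻¹ •
        (Matrix.vecMulVec τ₁ (braS tt₁) - Matrix.vecMulVec (ketS τ₁) (braC tt₁)))
    (t₂ τt₂ τ₆ tt₆ : Fin 2 → ℂ)
    (ht₂ : Matrix.vecMul (braC t₂) ut₂ = braS τt₂)
    (hτ₆ : (u₆⁻¹).mulVec (ketS τ₆) = -tt₆) :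
    bs t₂ τ₆ = ((N₁ : ℂ))⁻¹ * (sk tt₆ τ₁ * sk tt₁ τt₂ - ss tt₆ τ₁ * bk tt₁ τt₂) := by
  have htransport : bs t₂ τ₆ = braS τt₂ ⬝ᵥ u₁⁻¹ *ᵥ (-tt₆) :=
    calc bs t₂ τ₆ = braC t₂ ⬝ᵥ (ut₂ * u₁⁻¹ * u₆⁻¹) *ᵥ ketS τ₆ := by
          rw [hflat, one_mulVec, bs_eq_braC_dotProduct_ketS]
      _ = (braC t₂ ᵥ* ut₂) ⬝ᵥ u₁⁻¹ *ᵥ (u₆⁻¹ *ᵥ ketS τ₆) := by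
          simp only [dotProduct_mulVec, mulVec_mulVec, vecMul_vecMul, Matrix.mul_assoc]
      _ = braS τt₂ ⬝ᵥ u₁⁻¹ *ᵥ (-tt₆) := by rw [ht₂, hτ₆]
  have hinv : u₁⁻¹ = -((N₁ : ℂ)⁻¹ • spinorMatrix tt₁ τ₁) := by
    rw [inv_eq_adjugate_of_det_eq_one hu₁.2, hu₁eq, adjugate_smul, ← spinorMatrix,
      adjugate_spinorMatrix, Fintype.card_fin, pow_one, smul_neg]
  rw [htransport, hinv, neg_mulVec, mulVec_neg, neg_neg, smul_mulVec, dotProduct_smul,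
    braS_dotProduct_spinorMatrix_mulVec, sk_anticomm τt₂, sk_anticomm τ₁, ss_eq_bk, ss_eq_bk tt₆,
    smul_eq_mul]
  ring

/-- Spinorial Hamiltonian constraint on a triangular face: under the flatness
constraint `ũ₂·u₁⁻¹·u₆⁻¹ = 𝟙`, the matrix element `⟨t₂|τ₆]` equals
`(1/N₁)·([t̃₆|τ₁⟩·[t̃₁|τ̃₂⟩ − [t̃₆|τ₁]·⟨t̃₁|τ̃₂⟩)`: the holonomies drop out and
flatness becomes a polynomial relation among the quadratic spinor invariants. -/
theorem triangular_face_hamiltonian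
    (u₁ u₆ ut₂ : Matrix (Fin 2) (Fin 2) ℂ)
    (hu₁ : u₁ ∈ Matrix.unitaryGroup (Fin 2) ℂ ∧ u₁.det = 1)
    (hu₆ : u₆ ∈ Matrix.unitaryGroup (Fin 2) ℂ ∧ u₆.det = 1)
    (hut₂ : ut₂ ∈ Matrix.unitaryGroup (Fin 2) ℂ ∧ ut₂.det = 1)
    (hflat : ut₂ * u₁⁻¹ * u₆⁻¹ = 1)
    (τ₁ tt₁ : Fin 2 → ℂ) (hτ₁ : τ₁ ≠ 0) (htt₁ : tt₁ ≠ 0)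
    (N₁ : ℝ)
    (hN₁ : N₁ = Real.sqrt ((Complex.normSq (τ₁ 0) + Complex.normSq (τ₁ 1)) *
        (Complex.normSq (tt₁ 0) + Complex.normSq (tt₁ 1))))
    (hu₁eq : u₁ = ((N₁ : ℂ))⁻¹ •
        (Matrix.vecMulVec τ₁ (braS tt₁) - Matrix.vecMulVec (ketS τ₁) (braC tt₁)))
    (t₂ τt₂ τ₆ tt₆ : Fin 2 → ℂ)
    (ht₂ : Matrix.vecMul (braC t₂) ut₂ = braS τt₂)
    (hτ₆ : (u₆⁻¹).mulVec (ketS τ₆) = -tt₆) :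
    bs t₂ τ₆ = ((N₁ : ℂ))⁻¹ * (sk tt₆ τ₁ * sk tt₁ τt₂ - ss tt₆ τ₁ * bk tt₁ τt₂) :=
  triangular_face_hamiltonian_general u₁ u₆ ut₂ hu₁ hflat τ₁ tt₁ N₁ hu₁eq t₂ τt₂ τ₆ tt₆ ht₂ hτ₆
end
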